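/- Let f : X → X be a homeomorphism of a compact metric space and Λ a closed f-invariant subset with nonempty interior such that f|_Λ is chain transitive and f has shadowing on B_b(Λ) for some b > 0. Then Λ is simultaneously an initial and a terminal chain component of f. -/

import Mathlib

/-!
Shadowing near `Λ` keeps `δ`-chains that start in `Λ` close to `Λ`. Prefix such a chain by a
chain inside `Λ` that starts at an interior point `p`: a shadowing orbit then starts near `p`,
hence in `Λ`, so it stays in `Λ` while following the chain up to `ε`. Inductively the chain never
leaves `B_b(Λ)`, so the shadowing applies at every step, and its endpoint is `ε`-close to `Λ`;
as `Λ` is closed it is chain stable. Reversing chains under the uniformly continuous inverse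
transfers all hypotheses to `f⁻¹`, which gives the initial property, and chain transitivity
makes `Λ` a chain component.
-/

open Metric Filter Topology Set

variable {X : Type*}

/-- `(c i)_{i=0}^k` is a `δ`-chain of `f` (up to index `k`). -/
def IsDeltaChain [MetricSpace X] (f : X → X) (δ : ℝ) (k : ℕ) (c : ℕ → X) : Prop :=
  ∀ i < k, dist (f (c i)) (c (i + 1)) ≤ δ

/-- `x → y` : for every `δ > 0` there is a `δ`-chain from `x` to `y`. -/
def ChainReach [MetricSpace X] (f : X → X) (x y : X) : Prop :=
  ∀ δ > 0, ∃ k ≥ 1, ∃ c : ℕ → X, c 0 = x ∧ c k = y ∧ IsDeltaChain f δ k c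

/-- The chain recurrent set. -/
def ChainRec [MetricSpace X] (f : X → X) : Set X := {x | ChainReach f x x}

/-- `C` is a chain component of `f`. -/
def IsChainComponent [MetricSpace X] (f : X → X) (C : Set X) : Prop :=
  ∃ x, ChainReach f x x ∧
    C = {y | ChainReach f y y ∧ ChainReach f x y ∧ ChainReach f y x}

/-- A set is chain stable iff points chain-reachable from it stay in it. -/
def ChainStable [MetricSpace X] (f : X → X) (S : Set X) : Prop :=
  ∀ x ∈ S, ∀ y, ChainReach f x y → y ∈ S

/-- `S` is "initially stable": if `y → x` with `x ∈ S` then `y ∈ S`. -/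
def InitialStable [MetricSpace X] (f : X → X) (S : Set X) : Prop :=
  ∀ x ∈ S, ∀ y, ChainReach f y x → y ∈ S

/-- `f` restricted to `Λ` is chain transitive. -/
def ChainTransitiveOn [MetricSpace X] (f : X → X) (Λ : Set X) : Prop :=
  ∀ p ∈ Λ, ∀ q ∈ Λ, ∀ δ > 0, ∃ k ≥ 1, ∃ c : ℕ → X,
    c 0 = p ∧ c k = q ∧ (∀ i ≤ k, c i ∈ Λ) ∧ IsDeltaChain f δ k c

/-- `f` has shadowing on `S`. -/
def ShadowsOn [MetricSpace X] (f : X → X) (S : Set X) : Prop :=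
  ∀ ε > 0, ∃ δ > 0, ∀ (k : ℕ) (c : ℕ → X), (∀ i ≤ k, c i ∈ S) →
    IsDeltaChain f δ k c → ∃ x, ∀ i ≤ k, dist (c i) (f^[i] x) ≤ ε

/-- Iterate of a homeomorphism indexed by `ℤ`. -/
def hIter [TopologicalSpace X] (f : X ≃ₜ X) (i : ℤ) : X → X :=
  if 0 ≤ i then (⇑f)^[i.toNat] else (⇑f.symm)^[(-i).toNat]

/-- A `δ`-limit-pseudo orbit of the homeomorphism `f`. -/
def IsLimitPseudoOrbit [MetricSpace X] (f : X ≃ₜ X) (δ : ℝ) (ξ : ℤ → X) : Prop :=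
  (∀ i : ℤ, dist (f (ξ i)) (ξ (i + 1)) ≤ δ) ∧
  Tendsto (fun i : ℤ => dist (f (ξ i)) (ξ (i + 1))) atBot (nhds 0) ∧
  Tendsto (fun i : ℤ => dist (f (ξ i)) (ξ (i + 1))) atTop (nhds 0)

/-- `f` has L-shadowing on `S`. -/
def LShadowsOn [MetricSpace X] (f : X ≃ₜ X) (S : Set X) : Prop :=
  ∀ ε > 0, ∃ δ > 0, ∀ ξ : ℤ → X, (∀ i : ℤ, ξ i ∈ S) →
    IsLimitPseudoOrbit f δ ξ →
    ∃ x : X, (∀ i : ℤ, dist (ξ i) (hIter f i x) ≤ ε) ∧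
      Tendsto (fun i : ℤ => dist (ξ i) (hIter f i x)) atBot (nhds 0) ∧
      Tendsto (fun i : ℤ => dist (ξ i) (hIter f i x)) atTop (nhds 0)

/-- `f` is expansive on `S`. -/
def ExpansiveOn [MetricSpace X] (f : X ≃ₜ X) (S : Set X) : Prop :=
  ∃ e > 0, ∀ x y : X, (∀ i : ℤ, hIter f i x ∈ S) → (∀ i : ℤ, hIter f i y ∈ S) →
    (∀ i : ℤ, dist (hIter f i x) (hIter f i y) ≤ e) → x = y

/-- Closed `b`-neighborhood of `S`. -/
def Nbhd [MetricSpace X] (b : ℝ) (S : Set X) : Set X := {x | Metric.infDist x S ≤ b}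

/-- Attractor for a continuous map `f`. -/
def IsAttractor [TopologicalSpace X] (f : X → X) (Λ : Set X) : Prop :=
  IsClosed Λ ∧ f '' Λ = Λ ∧
    ∃ U : Set X, IsOpen U ∧ f '' closure U ⊆ U ∧ Λ = ⋂ i : ℕ, f^[i] '' U

/-- `f` is (topologically) mixing. -/
def IsMixing [TopologicalSpace X] (f : X → X) : Prop :=
  ∀ U V : Set X, IsOpen U → IsOpen V → U.Nonempty → V.Nonempty →
    ∃ j : ℕ, ∀ i ≥ j, (f^[i] '' U ∩ V).Nonempty

/-- The ω-limit set of `x` under `f`. -/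
def OmegaSet [TopologicalSpace X] (f : X → X) (x : X) : Set X :=
  {y | ∃ φ : ℕ → ℕ, StrictMono φ ∧ Tendsto (fun j => f^[φ j] x) atTop (nhds y)}

/-- `M` is a minimal set for `f`. -/
def IsMinimalSet [TopologicalSpace X] (f : X → X) (M : Set X) : Prop :=
  M.Nonempty ∧ IsClosed M ∧ f '' M ⊆ M ∧ ∀ x ∈ M, OmegaSet f x = M


namespace IsDeltaChain

variable [MetricSpace X] {f g g' : X → X} {δ γ : ℝ} {k m n : ℕ} {a c : ℕ → X}

theorem mono (hδ : δ ≤ γ) (hc : IsDeltaChain f δ k c) : IsDeltaChain f γ k c :=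
  fun i hi => (hc i hi).trans hδ

theorem of_le (hn : n ≤ k) (hc : IsDeltaChain f δ k c) : IsDeltaChain f δ n c :=
  fun i hi => hc i (hi.trans_le hn)

theorem append (ha : IsDeltaChain f δ m a) (hc : IsDeltaChain f δ n c) (hac : a m = c 0) :
    IsDeltaChain f δ (m + n) (fun j => if j ≤ m then a j else c (j - m)) := by
  intro i hi
  rcases lt_or_ge i m with him | hmi
  · simpa [him.le, Nat.succ_le_of_lt him] using ha i him
  · have hc' := hc (i - m) (by omega)
    rw [show i - m + 1 = i + 1 - m by omega] at hc'
    rcases hmi.eq_or_lt with rfl | hmi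
    · simpa [hac] using hc'
    · simpa [hmi.not_ge, show ¬i + 1 ≤ m by omega] using hc'

theorem reverse (hgg : Function.LeftInverse g' g)
    (hγ : ∀ ⦃u v : X⦄, dist u v ≤ γ → dist (g' u) (g' v) ≤ δ) (hc : IsDeltaChain g γ k c) :
    IsDeltaChain g' δ k (fun j => c (k - j)) := by
  intro i hi
  have h := hγ (hc (k - (i + 1)) (by omega))
  rw [hgg, show k - (i + 1) + 1 = k - i by omega] at h
  rwa [dist_comm]

end IsDeltaChain

section Reverse

variable [MetricSpace X] {g g' : X → X} {Λ S : Set X}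

theorem ChainReach.reverse (hg' : UniformContinuous g') (hgg : Function.LeftInverse g' g)
    {x y : X} (h : ChainReach g x y) : ChainReach g' y x := by
  intro δ hδ
  obtain ⟨γ, hγ, hγδ⟩ := Metric.uniformContinuous_iff_le.1 hg' δ hδ
  obtain ⟨k, hk, c, hc0, hck, hc⟩ := h γ hγ
  exact ⟨k, hk, fun j => c (k - j), by simpa, by simpa, hc.reverse hgg hγδ⟩

theorem ChainTransitiveOn.reverse (hg' : UniformContinuous g')
    (hgg : Function.LeftInverse g' g) (h : ChainTransitiveOn g Λ) : ChainTransitiveOn g' Λ := by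
  intro p hp q hq δ hδ
  obtain ⟨γ, hγ, hγδ⟩ := Metric.uniformContinuous_iff_le.1 hg' δ hδ
  obtain ⟨k, hk, c, hc0, hck, hcΛ, hc⟩ := h q hq p hp γ hγ
  exact ⟨k, hk, fun j => c (k - j), by simpa, by simpa, fun i _ => hcΛ _ (Nat.sub_le _ _),
    hc.reverse hgg hγδ⟩

/-- The shadowing point of a `g'`-chain is `g^[k] w`, where `w` shadows the reversed `g`-chain. -/
theorem ShadowsOn.reverse (hg : UniformContinuous g) (hgg : Function.LeftInverse g' g)
    (hgg' : Function.RightInverse g' g) (h : ShadowsOn g S) : ShadowsOn g' S := by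
  intro ε hε
  obtain ⟨δ, hδ, hδε⟩ := h ε hε
  obtain ⟨γ, hγ, hγδ⟩ := Metric.uniformContinuous_iff_le.1 hg δ hδ
  refine ⟨γ, hγ, fun k c hcS hc => ?_⟩
  obtain ⟨w, hw⟩ := hδε k (fun j => c (k - j)) (fun i _ => hcS _ (Nat.sub_le _ _))
    (hc.reverse hgg' hγδ)
  refine ⟨g^[k] w, fun i hi => ?_⟩
  have hw' := hw (k - i) (Nat.sub_le _ _)
  rwa [Nat.sub_sub_self hi, ← (hgg.iterate i) (g^[k - i] w), ← Function.iterate_add_apply,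
    Nat.add_sub_cancel' hi] at hw'

end Reverse

theorem ChainTransitiveOn.chainReach [MetricSpace X] {f : X → X} {Λ : Set X}
    (h : ChainTransitiveOn f Λ) {p q : X} (hp : p ∈ Λ) (hq : q ∈ Λ) : ChainReach f p q := by
  intro δ hδ
  obtain ⟨k, hk, c, hc0, hck, -, hc⟩ := h p hp q hq δ hδ
  exact ⟨k, hk, c, hc0, hck, hc⟩

theorem isChainComponent_of_chainStable [MetricSpace X] {f : X → X} {Λ : Set X}
    (hne : Λ.Nonempty) (hct : ChainTransitiveOn f Λ) (hstab : ChainStable f Λ) :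
    IsChainComponent f Λ := by
  obtain ⟨p, hp⟩ := hne
  refine ⟨p, hct.chainReach hp hp, Set.ext fun y => ⟨fun hy => ?_, fun ⟨_, hpy, _⟩ => ?_⟩⟩
  · exact ⟨hct.chainReach hy hy, hct.chainReach hp hy, hct.chainReach hy hp⟩
  · exact hstab p hp y hpy

section Stability

variable [MetricSpace X] {f : X → X} {Λ S : Set X}

theorem infDist_le_add_of_infDist_lt (hΛ : Λ.Nonempty) (hmaps : MapsTo f Λ Λ) {β γ δ : ℝ}
    (hγ : ∀ ⦃u v : X⦄, dist u v < γ → dist (f u) (f v) < β) {u v : X}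
    (hu : infDist u Λ < γ) (hv : dist (f u) v ≤ δ) : infDist v Λ ≤ β + δ := by
  obtain ⟨q, hq, huq⟩ := (infDist_lt_iff hΛ).1 hu
  calc infDist v Λ ≤ dist v (f q) := infDist_le_dist_of_mem (hmaps hq)
    _ ≤ dist (f u) v + dist (f u) (f q) := dist_triangle_left _ _ _
    _ ≤ β + δ := by linarith [(hγ huq).le]

/-- A point shadowing the concatenation of `a` and `c` starts in `ball p r ⊆ Λ`, so its orbit
stays in `Λ` and ends `ε`-close to `c n`. -/
theorem infDist_le_of_shadowed {p x : X} {r ε δ : ℝ} (hmaps : MapsTo f Λ Λ)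
    (hball : ball p r ⊆ Λ) (hεr : ε < r) (hΛS : Λ ⊆ S)
    (hsh : ∀ (k : ℕ) (c : ℕ → X), (∀ i ≤ k, c i ∈ S) →
      IsDeltaChain f δ k c → ∃ w, ∀ i ≤ k, dist (c i) (f^[i] w) ≤ ε)
    {m n : ℕ} {a c : ℕ → X} (ha0 : a 0 = p) (ham : a m = x) (haΛ : ∀ i ≤ m, a i ∈ Λ)
    (ha : IsDeltaChain f δ m a) (hc0 : c 0 = x) (hcS : ∀ i ≤ n, c i ∈ S)
    (hc : IsDeltaChain f δ n c) : infDist (c n) Λ ≤ ε := by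
  have hdS : ∀ j ≤ m + n, (fun j => if j ≤ m then a j else c (j - m)) j ∈ S := by
    intro j hj
    by_cases hjm : j ≤ m
    · simpa [hjm] using hΛS (haΛ j hjm)
    · simpa [hjm] using hcS (j - m) (by omega)
  obtain ⟨w, hw⟩ := hsh _ _ hdS (ha.append hc (ham.trans hc0.symm))
  have hwΛ : w ∈ Λ := hball <| by
    simpa [ha0, dist_comm] using (hw 0 (Nat.zero_le _)).trans_lt hεr
  have hend := hw (m + n) le_rfl
  rcases n.eq_zero_or_pos with rfl | hn
  · simp only [add_zero, le_rfl, if_true, ham, ← hc0] at hend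
    exact (infDist_le_dist_of_mem (hmaps.iterate m hwΛ)).trans hend
  · simp only [show ¬m + n ≤ m by omega, if_false, Nat.add_sub_cancel_left] at hend
    exact (infDist_le_dist_of_mem (hmaps.iterate (m + n) hwΛ)).trans hend

theorem exists_pos_infDist_chain_le (hf : UniformContinuous f) (hmaps : MapsTo f Λ Λ)
    (hint : (interior Λ).Nonempty) (hct : ChainTransitiveOn f Λ) {b : ℝ} (hb : 0 < b)
    (hsh : ShadowsOn f (Nbhd b Λ)) {ε : ℝ} (hε : 0 < ε) :
    ∃ δ > 0, ∀ (k : ℕ) (c : ℕ → X), c 0 ∈ Λ → IsDeltaChain f δ k c → infDist (c k) Λ ≤ ε := by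
  obtain ⟨p, hp⟩ := hint
  obtain ⟨r, hr, hball⟩ := Metric.isOpen_iff.1 isOpen_interior p hp
  replace hball : ball p r ⊆ Λ := hball.trans interior_subset
  have hpΛ : p ∈ Λ := hball (mem_ball_self hr)
  have hΛS : Λ ⊆ Nbhd b Λ := fun z hz => by simp [Nbhd, infDist_zero_of_mem hz, hb.le]
  obtain ⟨γ, hγ, hγf⟩ := Metric.uniformContinuous_iff.1 hf (b / 2) (by positivity)
  set ε' := min (min ε b) (min (r / 2) (γ / 2))
  have hε' : 0 < ε' := by positivity
  have hε'ε : ε' ≤ ε := (min_le_left _ _).trans (min_le_left _ _)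
  have hε'b : ε' ≤ b := (min_le_left _ _).trans (min_le_right _ _)
  have hε'r : ε' < r := (min_le_right _ _).trans_lt ((min_le_left _ _).trans_lt (by linarith))
  have hε'γ : ε' < γ := (min_le_right _ _).trans_lt ((min_le_right _ _).trans_lt (by linarith))
  obtain ⟨δ₁, hδ₁, hshδ₁⟩ := hsh ε' hε'
  refine ⟨min δ₁ (b / 2), by positivity, fun k c hc0 hc => ?_⟩
  obtain ⟨m, -, a, ha0, ham, haΛ, ha⟩ := hct p hpΛ (c 0) hc0 (min δ₁ (b / 2)) (by positivity)
  have hend : ∀ n ≤ k, (∀ i ≤ n, c i ∈ Nbhd b Λ) → infDist (c n) Λ ≤ ε' := fun n hn hcS =>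
    infDist_le_of_shadowed hmaps hball hε'r hΛS
      (fun k c hcS hc => hshδ₁ k c hcS (hc.mono (min_le_left _ _)))
      ha0 ham haΛ ha rfl hcS (hc.of_le hn)
  -- the shadowing estimate at step `n` keeps `c (n + 1)` within `b` of `Λ`
  have hS : ∀ n ≤ k, ∀ i ≤ n, c i ∈ Nbhd b Λ := by
    intro n
    induction n with
    | zero => intro _ i hi; rw [Nat.le_zero.1 hi]; exact hΛS hc0
    | succ n ih =>
      intro hn i hi
      rcases Nat.le_succ_iff.1 hi with hi | rfl
      · exact ih (by omega) i hi
      · have hnext := infDist_le_add_of_infDist_lt ⟨p, hpΛ⟩ hmaps hγf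
          ((hend n (by omega) (ih (by omega))).trans_lt hε'γ)
          ((hc n (by omega)).trans (min_le_right _ _))
        show infDist _ _ ≤ b
        linarith
  exact (hend k le_rfl (hS k le_rfl)).trans hε'ε

theorem chainStable_of_shadowsOn (hf : UniformContinuous f) (hΛc : IsClosed Λ)
    (hmaps : MapsTo f Λ Λ) (hint : (interior Λ).Nonempty) (hct : ChainTransitiveOn f Λ)
    {b : ℝ} (hb : 0 < b) (hsh : ShadowsOn f (Nbhd b Λ)) : ChainStable f Λ := by
  intro x hx y hxy
  rw [hΛc.mem_iff_infDist_zero ⟨x, hx⟩]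
  refine le_antisymm (le_of_forall_pos_le_add fun ε hε => ?_) infDist_nonneg
  obtain ⟨δ, hδ, hδε⟩ := exists_pos_infDist_chain_le hf hmaps hint hct hb hsh hε
  obtain ⟨k, -, c, hc0, rfl, hc⟩ := hxy δ hδ
  simpa using hδε k c (hc0 ▸ hx) hc

end Stability

theorem stmt7 [MetricSpace X] [CompactSpace X] (f : X ≃ₜ X)
    (Λ : Set X) (hΛc : IsClosed Λ) (hΛinv : ⇑f '' Λ = Λ)
    (hint : (interior Λ).Nonempty) (hct : ChainTransitiveOn (⇑f) Λ)
    (b : ℝ) (hb : 0 < b) (hsh : ShadowsOn (⇑f) (Nbhd b Λ)) :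
    IsChainComponent (⇑f) Λ ∧ ChainStable (⇑f) Λ ∧ InitialStable (⇑f) Λ := by
  have hf := CompactSpace.uniformContinuous_of_continuous f.continuous
  have hf' := CompactSpace.uniformContinuous_of_continuous f.symm.continuous
  have hmaps : MapsTo f Λ Λ := fun z hz => hΛinv ▸ mem_image_of_mem f hz
  have hmaps' : MapsTo f.symm Λ Λ := by
    rintro _ hx
    obtain ⟨z, hz, rfl⟩ := hΛinv.symm ▸ hx
    simpa using hz
  have hstab := chainStable_of_shadowsOn hf hΛc hmaps hint hct hb hsh
  have hstab' := chainStable_of_shadowsOn hf' hΛc hmaps' hint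
    (hct.reverse hf' f.symm_apply_apply) hb
    (hsh.reverse hf f.symm_apply_apply f.apply_symm_apply)
  exact ⟨isChainComponent_of_chainStable (hint.mono interior_subset) hct hstab, hstab,
    fun x hx y hyx => hstab' x hx y (hyx.reverse hf' f.symm_apply_apply)⟩
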